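/- arXiv:2101.07554 — 3 statements merged into one kernel-verified Lean document; each statement's English description precedes it below -/
import Mathlib

section
/- Let P be a subset of the plane ℝ², let v be a point of P, and let I ⊆ P be a convex set such that v sees every point of I within P (i.e., for every x ∈ I the segment from v to x is contained in P). Then every point u lying in the convex hull of {v} ∪ I sees every point of I within P: for every u in the convex hull of {v} ∪ I and every x ∈ I, the segment from u to x is contained in P. -/
/-!
The convex hull of `{v} ∪ I` is the union of the segments `[v, z]`, `z ∈ I`, hence lies in `P`.
Being convex, it contains the segment from any of its points `u` to any `x ∈ I`.
-/

open Set

theorem convexHull_singleton_union_subset {𝕜 E : Type*} [Field 𝕜] [LinearOrder 𝕜]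
    [IsStrictOrderedRing 𝕜] [AddCommGroup E] [Module 𝕜 E] {P I : Set E} {v : E}
    (hI : Convex 𝕜 I) (hne : I.Nonempty) (hsees : ∀ z ∈ I, segment 𝕜 v z ⊆ P) :
    convexHull 𝕜 ({v} ∪ I) ⊆ P := by
  rw [(convex_singleton v).convexHull_union hI (singleton_nonempty v) hne,
    convexJoin_singleton_left]
  exact iUnion₂_subset hsees

theorem mem_convexHull_sees_all_of_convex_general
    (P : Set (ℝ × ℝ)) (v : ℝ × ℝ)
    (I : Set (ℝ × ℝ)) (hIconv : Convex ℝ I)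
    (hsees : ∀ x ∈ I, segment ℝ v x ⊆ P) :
    ∀ u ∈ convexHull ℝ ({v} ∪ I), ∀ x ∈ I, segment ℝ u x ⊆ P := by
  intro u hu x hx
  have hx_hull : x ∈ convexHull ℝ ({v} ∪ I) := subset_convexHull ℝ _ (Or.inr hx)
  exact ((convex_convexHull ℝ _).segment_subset hu hx_hull).trans
    (convexHull_singleton_union_subset hIconv ⟨x, hx⟩ hsees)

/-- If `v ∈ P` sees every point of a convex set `I ⊆ P` within `P`, then every
point of the convex hull of `{v} ∪ I` sees every point of `I` within `P`. -/
theorem mem_convexHull_sees_all_of_convex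
    (P : Set (ℝ × ℝ)) (v : ℝ × ℝ) (hv : v ∈ P)
    (I : Set (ℝ × ℝ)) (hIP : I ⊆ P) (hIconv : Convex ℝ I)
    (hsees : ∀ x ∈ I, segment ℝ v x ⊆ P) :
    ∀ u ∈ convexHull ℝ ({v} ∪ I), ∀ x ∈ I, segment ℝ u x ⊆ P :=
  mem_convexHull_sees_all_of_convex_general P v I hIconv hsees
end

section
/- Let k ≥ 2 be a natural number, let V be a finite type, and let r : V → V → Prop be a relation such that: (1) the set of sinks S = {v : ∀ u, ¬ r v u} has cardinality at most 2; (2) every vertex v has at most k−1 in-neighbors, i.e., the set {u : r u v} has cardinality at most k−1; and (3) every vertex admits an r-chain starting at it and ending at a sink with at most k+1 entries. Then the cardinality of V is at most 2 · ∑_{i=0}^{k} kⁱ. -/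
open Finset in
/-- The combinatorial core of the upper bound: a finite relation with at most
two sinks, in-degree at most `k - 1`, such that every vertex reaches a sink
by an `r`-chain with at most `k + 1` entries, has at most
`2 * ∑_{i=0}^{k} k^i` vertices. -/
theorem card_le_of_visibility_restriction_graph
    (k : ℕ) (hk : 2 ≤ k) (V : Type*) [Fintype V] (r : V → V → Prop)
    (hsinks : Set.ncard {v : V | ∀ u : V, ¬ r v u} ≤ 2)
    (hin : ∀ v : V, Set.ncard {u : V | r u v} ≤ k - 1)
    (hchain : ∀ v : V, ∃ l : List V, l.Chain' r ∧ l.head? = some v ∧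
      (∃ s : V, l.getLast? = some s ∧ ∀ u : V, ¬ r s u) ∧
      l.length ≤ k + 1) :
    Fintype.card V ≤ 2 * ∑ i ∈ Finset.range (k + 1), k ^ i := by
  classical
  -- A d : vertices having a chain of length d+1 to a sink
  set A : ℕ → Finset V := fun d => Finset.univ.filter (fun v =>
    ∃ l : List V, l.Chain' r ∧ l.head? = some v ∧
      (∃ s : V, l.getLast? = some s ∧ ∀ u : V, ¬ r s u) ∧ l.length = d + 1) with hA
  have hmemA : ∀ d v, v ∈ A d ↔ ∃ l : List V, l.Chain' r ∧ l.head? = some v ∧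
      (∃ s : V, l.getLast? = some s ∧ ∀ u : V, ¬ r s u) ∧ l.length = d + 1 := by
    intro d v; simp [hA]
  -- every vertex is in some A d with d ≤ k
  have hcover : (Finset.univ : Finset V) ⊆ (Finset.range (k + 1)).biUnion A := by
    intro v _
    obtain ⟨l, hc, hh, hs, hlen⟩ := hchain v
    have hne : l ≠ [] := by
      intro h; rw [h] at hh; simp at hh
    have hpos : 1 ≤ l.length := List.length_pos_iff.mpr hne
    refine Finset.mem_biUnion.mpr ⟨l.length - 1, ?_, ?_⟩
    · exact Finset.mem_range.mpr (by omega)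
    · exact (hmemA _ v).mpr ⟨l, hc, hh, hs, by omega⟩
  -- A 0 consists of sinks
  have hA0 : (A 0).card ≤ 2 := by
    have hsub : (A 0 : Set V) ⊆ {v : V | ∀ u : V, ¬ r v u} := by
      intro v hv
      obtain ⟨l, hc, hh, ⟨s, hls, hsink⟩, hlen⟩ := (hmemA 0 v).mp hv
      obtain ⟨a, rfl⟩ : ∃ a, l = [a] := by
        match l, hlen with
        | [a], _ => exact ⟨a, rfl⟩
      simp only [List.head?_cons, Option.some.injEq] at hh
      simp only [List.getLast?_singleton, Option.some.injEq] at hls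
      subst hh; subst hls
      exact hsink
    have := Set.ncard_le_ncard hsub (Set.toFinite _)
    rw [Set.ncard_coe_finset] at this
    exact this.trans hsinks
  -- A (d+1) fits in in-neighborhoods of A d
  have hstep : ∀ d, (A (d + 1)).card ≤ (A d).card * (k - 1) := by
    intro d
    have hsub : A (d + 1) ⊆ (A d).biUnion (fun w => Finset.univ.filter (fun u => r u w)) := by
      intro v hv
      obtain ⟨l, hc, hh, ⟨s, hls, hsink⟩, hlen⟩ := (hmemA (d + 1) v).mp hv
      obtain ⟨a, b, t, rfl⟩ : ∃ a b t, l = a :: b :: t := by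
        match l, hlen with
        | a :: b :: t, _ => exact ⟨a, b, t, rfl⟩
      obtain rfl : a = v := by simpa using hh
      have hrvb : r a b := (List.isChain_cons_cons.mp hc).1
      rw [List.getLast?_cons_cons] at hls
      refine Finset.mem_biUnion.mpr ⟨b, ?_, by simp [hrvb]⟩
      exact (hmemA d b).mpr ⟨b :: t, (List.isChain_cons_cons.mp hc).2, rfl, ⟨s, hls, hsink⟩, by simpa using hlen⟩
    calc (A (d + 1)).card ≤ _ := Finset.card_le_card hsub
      _ ≤ ∑ w ∈ A d, (Finset.univ.filter (fun u => r u w)).card := Finset.card_biUnion_le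
      _ ≤ ∑ _w ∈ A d, (k - 1) := by
          refine Finset.sum_le_sum fun w _ => ?_
          have := hin w
          rwa [Set.ncard_eq_toFinset_card', Set.toFinset_setOf] at this
      _ = (A d).card * (k - 1) := by simp [Finset.sum_const, Nat.smul_one_eq_cast, mul_comm]
  -- bound each level
  have hbound : ∀ d, (A d).card ≤ 2 * k ^ d := by
    intro d
    induction d with
    | zero => simpa using hA0
    | succ d ih =>
        calc (A (d + 1)).card ≤ (A d).card * (k - 1) := hstep d
          _ ≤ (2 * k ^ d) * k := by
              have : k - 1 ≤ k := Nat.sub_le _ _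
              exact Nat.mul_le_mul ih this
          _ = 2 * k ^ (d + 1) := by ring
  calc Fintype.card V = (Finset.univ : Finset V).card := rfl
    _ ≤ ((Finset.range (k + 1)).biUnion A).card := Finset.card_le_card hcover
    _ ≤ ∑ d ∈ Finset.range (k + 1), (A d).card := Finset.card_biUnion_le
    _ ≤ ∑ d ∈ Finset.range (k + 1), 2 * k ^ d := Finset.sum_le_sum fun d _ => hbound d
    _ = 2 * ∑ i ∈ Finset.range (k + 1), k ^ i := (Finset.mul_sum _ _ _).symm
end

section
/- Let P ⊆ ℝ² and x₀ ∈ ℝ be such that every point of P has first coordinate at least x₀, for every t ∈ ℝ the horizontal slice {x : (x, t) ∈ P} is a convex subset of ℝ, and for every point q ∈ P the point (x₀, q.2) (the point at abscissa x₀ with the same second coordinate as q) belongs to P. Let q, r ∈ P be points such that the segment from q to r is contained in P. Then the segment from (x₀, q.2) to r is also contained in P. -/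
/-! Write a point of the segment from `(x₀, q.2)` to `r` as `a • (x₀, q.2) + b • r`. It lies on the
same horizontal line as `z = a • q + b • r ∈ P`, between the points `(x₀, z.2)` and `z` of `P`,
so convexity of that slice puts it in `P`. -/

open Set

lemma mem_of_snd_eq_of_fst_mem_Icc {P : Set (ℝ × ℝ)} {x₀ : ℝ}
    (hslice : ∀ t : ℝ, Convex ℝ {x : ℝ | (x, t) ∈ P})
    (hproj : ∀ q ∈ P, (x₀, q.2) ∈ P)
    {z w : ℝ × ℝ} (hz : z ∈ P) (hw₂ : w.2 = z.2) (hw₁ : w.1 ∈ Icc x₀ z.1) : w ∈ P := by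
  have hmem : w.1 ∈ {x : ℝ | (x, z.2) ∈ P} := (hslice z.2).ordConnected.out (hproj z hz) hz hw₁
  rw [← hw₂] at hmem
  exact hmem

/-- In a set `P ⊆ ℝ²` bounded to the left by abscissa `x₀`, with convex
horizontal slices, and closed under projecting points horizontally to
abscissa `x₀`: if `q ∈ P` sees `r ∈ P` within `P`, then the projected point
`(x₀, q.2)` also sees `r` within `P`. -/
theorem projected_point_sees_of_sees
    (P : Set (ℝ × ℝ)) (x₀ : ℝ)
    (hleft : ∀ p ∈ P, x₀ ≤ p.1)
    (hslice : ∀ t : ℝ, Convex ℝ {x : ℝ | (x, t) ∈ P})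
    (hproj : ∀ q ∈ P, (x₀, q.2) ∈ P)
    (q r : ℝ × ℝ) (hq : q ∈ P) (hr : r ∈ P)
    (hseg : segment ℝ q r ⊆ P) :
    segment ℝ (x₀, q.2) r ⊆ P := by
  rintro _ ⟨a, b, ha, hb, hab, rfl⟩
  refine mem_of_snd_eq_of_fst_mem_Icc hslice hproj (hseg ⟨a, b, ha, hb, hab, rfl⟩) rfl ⟨?_, ?_⟩
  · have hr₁ : b * x₀ ≤ b * r.1 := mul_le_mul_of_nonneg_left (hleft r hr) hb
    simp only [Prod.fst_add, Prod.smul_fst, smul_eq_mul]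
    linear_combination hr₁ - x₀ * hab
  · have hq₁ : a * x₀ ≤ a * q.1 := mul_le_mul_of_nonneg_left (hleft q hq) ha
    simpa only [Prod.fst_add, Prod.smul_fst, smul_eq_mul, add_le_add_iff_right] using hq₁
end
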